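/- Let G be an n-player constant-sum polymatrix game whose global utilities sum to the constant c at every pure profile, and let μ be an ε-coarse correlated equilibrium of G with marginal strategy profile s^μ. Then Σ_{i∈N} max_{ρ'_i ∈ P_i} u_i(ρ'_i, s^μ_{-i}) ≤ nε + c. -/
import Mathlib


open Finset

section GameTheory

variable {N : Type*} [Fintype N] [DecidableEq N]
variable {P : N → Type*} [∀ j, Fintype (P j)] [∀ j, DecidableEq (P j)] [∀ j, Nonempty (P j)]

/-- A probability distribution on a finite type. -/
def IsDist {A : Type*} [Fintype A] (μ : A → ℝ) : Prop :=
  (∀ a, 0 ≤ μ a) ∧ ∑ a, μ a = 1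

/-- A profile of mixed strategies: one probability distribution per player. -/
def IsMixedProfile (s : ∀ j, P j → ℝ) : Prop := ∀ j, IsDist (s j)

/-- The mixed strategy that plays the pure strategy `a` with probability 1. -/
def pureMix {A : Type*} [DecidableEq A] (a : A) : A → ℝ := fun b => if b = a then 1 else 0

/-- Expected utility of player `i` under the mixed-strategy profile `s`:
`u_i(s) = Σ_ρ (Π_j s_j(ρ_j)) u_i(ρ)`. -/
def mixedUtil (u : N → (∀ j, P j) → ℝ) (s : ∀ j, P j → ℝ) (i : N) : ℝ :=
  ∑ ρ : ∀ j, P j, (∏ j, s j (ρ j)) * u i ρ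

/-- `s` is an ε-Nash equilibrium: no player gains more than ε by deviating to a
pure strategy. -/
def IsEpsNash (u : N → (∀ j, P j) → ℝ) (s : ∀ j, P j → ℝ) (ε : ℝ) : Prop :=
  ∀ i, ∀ ρi' : P i,
    mixedUtil u (Function.update s i (pureMix ρi')) i - mixedUtil u s i ≤ ε

/-- `μ` is an ε-coarse correlated equilibrium. -/
def IsEpsCCE (u : N → (∀ j, P j) → ℝ) (μ : (∀ j, P j) → ℝ) (ε : ℝ) : Prop :=
  ∀ i, ∀ ρi' : P i,
    ∑ ρ : ∀ j, P j, μ ρ * (u i (Function.update ρ i ρi') - u i ρ) ≤ ε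

/-- The marginal strategy of player `i` under the joint distribution `μ`. -/
def marginal (μ : (∀ j, P j) → ℝ) (i : N) (pi : P i) : ℝ :=
  ∑ ρ : ∀ j, P j, if ρ i = pi then μ ρ else 0

/-- Neighbors of `i` in the polymatrix graph, i.e. the edges `E_i` containing `i`. -/
def neighbors (Adj : N → N → Bool) (i : N) : Finset N :=
  Finset.univ.filter (fun j => Adj i j)

/-- Global utility of player `i` in the polymatrix game given by graph `Adj`
and edgewise utilities `U`. -/
def polyUtil (Adj : N → N → Bool) (U : ∀ i j : N, P i → P j → ℝ) (i : N)
    (ρ : ∀ j, P j) : ℝ :=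
  ∑ j ∈ neighbors Adj i, U i j (ρ i) (ρ j)

/-- Expected utility of `i` in the two-player subgame with `j`, under mixed
strategies `si`, `sj`. -/
def subUtil (U : ∀ i j : N, P i → P j → ℝ) (i j : N) (si : P i → ℝ) (sj : P j → ℝ) : ℝ :=
  ∑ pi : P i, ∑ pj : P j, si pi * sj pj * U i j pi pj

/-- `Adj` is a valid edge indicator: symmetric and irreflexive. -/
def IsAdj (Adj : N → N → Bool) : Prop :=
  (∀ i j, Adj i j = Adj j i) ∧ (∀ i, Adj i i = false)

/-- `u` is the global utility function of the polymatrix game `(Adj, U)`. -/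
def IsPolymatrix (u : N → (∀ j, P j) → ℝ) (Adj : N → N → Bool)
    (U : ∀ i j : N, P i → P j → ℝ) : Prop :=
  IsAdj Adj ∧ ∀ i ρ, u i ρ = polyUtil Adj U i ρ

/-- The polymatrix game `(Adj, U)` is constant-sum on every edge. -/
def IsConstantSumPoly (Adj : N → N → Bool) (U : ∀ i j : N, P i → P j → ℝ) : Prop :=
  ∀ i j, Adj i j → ∃ c : ℝ, ∀ (pi : P i) (pj : P j), U i j pi pj + U j i pj pi = c

/-- `(si, sj)` is a γ-Nash equilibrium of the two-player subgame between `i` and `j`. -/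
def SubgameEpsNash (U : ∀ i j : N, P i → P j → ℝ) (i j : N) (si : P i → ℝ)
    (sj : P j → ℝ) (γ : ℝ) : Prop :=
  (∀ pi' : P i, subUtil U i j (pureMix pi') sj - subUtil U i j si sj ≤ γ) ∧
  (∀ pj' : P j, subUtil U j i (pureMix pj') si - subUtil U j i sj si ≤ γ)

end GameTheory


section Aux2
variable {N : Type*} [Fintype N] [DecidableEq N]
variable {P : N → Type*} [∀ j, Fintype (P j)] [∀ j, DecidableEq (P j)]

omit [∀ j, DecidableEq (P j)] in
lemma marginalize_one (t : ∀ j, P j → ℝ) (ht : ∀ j, ∑ p, t j p = 1)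
    (j : N) (g : P j → ℝ) :
    ∑ ρ : ∀ k, P k, (∏ k, t k (ρ k)) * g (ρ j) = ∑ p, t j p * g p := by
  set f : ∀ k, P k → ℝ := fun k p => t k p * (if h : k = j then g (h ▸ p) else 1) with hf
  have key : ∀ ρ : ∀ k, P k, (∏ k, t k (ρ k)) * g (ρ j) = ∏ k, f k (ρ k) := by
    intro ρ
    simp only [hf, Finset.prod_mul_distrib]
    congr 1
    rw [Finset.prod_eq_single j]
    · simp
    · intro k _ hk; simp [hk]
    · simp
  simp_rw [key]
  have h2 := (Finset.prod_univ_sum (fun k => (univ : Finset (P k)))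
      (fun k p => f k p)).symm
  rw [Fintype.piFinset_univ] at h2
  rw [h2, Finset.prod_eq_single j]
  · simp [hf]
  · intro k _ hk; simp [hf, hk, ht k]
  · simp

lemma sum_pureMix' {A : Type*} [Fintype A] [DecidableEq A] (a : A) :
    ∑ b, pureMix a b = 1 := by simp [pureMix]

lemma sum_marginal (μ : (∀ j, P j) → ℝ) (h : ∑ ρ, μ ρ = 1) (i : N) :
    ∑ p, marginal μ i p = 1 := by
  unfold marginal
  rw [Finset.sum_comm]
  simpa using h

lemma sum_marginal_mul (μ : (∀ j, P j) → ℝ) (j : N) (g : P j → ℝ) :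
    ∑ p, marginal μ j p * g p = ∑ ρ, μ ρ * g (ρ j) := by
  unfold marginal
  simp_rw [Finset.sum_mul, ite_mul, zero_mul]
  rw [Finset.sum_comm]
  simp

lemma mixedUtil_update_eq (u : N → (∀ j, P j) → ℝ) (Adj : N → N → Bool)
    (U : ∀ i j : N, P i → P j → ℝ) (hpoly : IsPolymatrix u Adj U)
    (μ : (∀ j, P j) → ℝ) (hμd : IsDist μ) (i : N) (ρi' : P i) :
    mixedUtil u (Function.update (fun j => marginal μ j) i (pureMix ρi')) i
      = ∑ ρ, μ ρ * u i (Function.update ρ i ρi') := by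
  set s : ∀ j, P j → ℝ := Function.update (fun j => marginal μ j) i (pureMix ρi') with hs
  have ht : ∀ k, ∑ p, s k p = 1 := by
    intro k
    rcases eq_or_ne k i with rfl | hk
    · simp [hs, sum_pureMix']
    · simp [hs, Function.update_of_ne hk, sum_marginal μ hμd.2]
  have hnb : ∀ j ∈ neighbors Adj i, j ≠ i := by
    intro j hj h
    subst h
    simp [neighbors, hpoly.1.2 j] at hj
  have hu : ∀ ρ : ∀ k, P k, u i (Function.update ρ i ρi')
      = ∑ j ∈ neighbors Adj i, U i j ρi' (ρ j) := by
    intro ρ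
    rw [hpoly.2]
    unfold polyUtil
    refine Finset.sum_congr rfl fun j hj => ?_
    rw [Function.update_self, Function.update_of_ne (hnb j hj)]
  have stepA : mixedUtil u s i
      = ∑ ρ : ∀ k, P k, (∏ k, s k (ρ k)) * u i (Function.update ρ i ρi') := by
    unfold mixedUtil
    refine Finset.sum_congr rfl fun ρ _ => ?_
    rcases eq_or_ne (ρ i) ρi' with h | h
    · rw [← h, Function.update_eq_self]
    · have : s i (ρ i) = 0 := by simp [hs, pureMix, h]
      rw [Finset.prod_eq_zero (Finset.mem_univ i) this, zero_mul, zero_mul]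
  rw [stepA]
  simp_rw [hu, Finset.mul_sum, Finset.sum_comm (s := Finset.univ)]
  refine Finset.sum_congr rfl fun j hj => ?_
  rw [marginalize_one s ht j (fun pj => U i j ρi' pj)]
  have : s j = marginal μ j := by rw [hs, Function.update_of_ne (hnb j hj)]
  rw [this, sum_marginal_mul]

end Aux2

/-- In an n-player constant-sum polymatrix game whose global utilities sum to
`c` at every pure profile, for any ε-CCE `μ` with marginal profile `s^μ`,
`Σ_i max_{ρ'_i} u_i(ρ'_i, s^μ_{-i}) ≤ nε + c`. -/
theorem sum_of_best_responses_bounded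
    {N : Type*} [Fintype N] [DecidableEq N]
    {P : N → Type*} [∀ j, Fintype (P j)] [∀ j, DecidableEq (P j)] [∀ j, Nonempty (P j)]
    (u : N → (∀ j, P j) → ℝ)
    (Adj : N → N → Bool) (U : ∀ i j : N, P i → P j → ℝ)
    (hpoly : IsPolymatrix u Adj U) (hcs : IsConstantSumPoly Adj U)
    (c : ℝ) (hc : ∀ ρ : ∀ j, P j, ∑ i, u i ρ = c)
    (ε : ℝ) (hε : 0 ≤ ε)
    (μ : (∀ j, P j) → ℝ) (hμd : IsDist μ) (hμ : IsEpsCCE u μ ε) :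
    ∑ i, Finset.univ.sup' Finset.univ_nonempty
        (fun ρi' : P i =>
          mixedUtil u (Function.update (fun j => marginal μ j) i (pureMix ρi')) i)
      ≤ (Fintype.card N : ℝ) * ε + c := by
  have hbound : ∀ i : N,
      (Finset.univ.sup' Finset.univ_nonempty
        (fun ρi' : P i =>
          mixedUtil u (Function.update (fun j => marginal μ j) i (pureMix ρi')) i))
        ≤ ε + ∑ ρ, μ ρ * u i ρ := by
    intro i
    refine Finset.sup'_le _ _ fun ρi' _ => ?_
    rw [mixedUtil_update_eq u Adj U hpoly μ hμd i ρi']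
    have h := hμ i ρi'
    simp_rw [mul_sub] at h
    rw [Finset.sum_sub_distrib] at h
    linarith
  calc ∑ i, Finset.univ.sup' Finset.univ_nonempty
        (fun ρi' : P i =>
          mixedUtil u (Function.update (fun j => marginal μ j) i (pureMix ρi')) i)
      ≤ ∑ i : N, (ε + ∑ ρ, μ ρ * u i ρ) := Finset.sum_le_sum fun i _ => hbound i
    _ = (Fintype.card N : ℝ) * ε + ∑ i : N, ∑ ρ, μ ρ * u i ρ := by
        rw [Finset.sum_add_distrib, Finset.sum_const, nsmul_eq_mul, Finset.card_univ]
    _ = (Fintype.card N : ℝ) * ε + c := by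
        congr 1
        rw [Finset.sum_comm]
        simp_rw [← Finset.mul_sum, hc]
        rw [← Finset.sum_mul, hμd.2, one_mul]
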